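/- A subset P of Q^n is a convex polyhedron (solution set of a finite system A x ≤ b) if and only if it can be written as the Minkowski sum of a finitely generated cone and a polytope (bounded polyhedron). -/

import Mathlib

/-!
Fourier–Motzkin elimination shows that projections of polyhedra are polyhedra, hence so are
linear images and Minkowski sums of polyhedra; finitely generated cones and convex hulls of
finitely many points are linear images of an orthant and of a simplex, which gives one direction.
In particular a finitely generated cone is polyhedral, hence the dual of a finite set (Weyl), and
applying this twice together with the bipolar identity shows that the dual of a finite set is
finitely generated (Minkowski). For the other direction, homogenize `a ⬝ᵥ x ≤ c` to
`a ⬝ᵥ x ≤ c t, 0 ≤ t`: this cone is finitely generated, its generators may be rescaled to height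
`0` or `1`, and slicing it at height `1` writes the polyhedron as the cone spanned by the
generators of height `0` plus the convex hull of those of height `1`.
-/

open Matrix

/-- `P` is the solution set of a finite system of linear inequalities. -/
def IsPolyhedron {n : ℕ} (P : Set (Fin n → ℚ)) : Prop :=
  ∃ (m : ℕ) (A : Matrix (Fin m) (Fin n) ℚ) (b : Fin m → ℚ),
    P = {x | A.mulVec x ≤ b}

/-- `C` is a finitely generated cone: all nonnegative combinations of
finitely many vectors. -/
def IsFinitelyGeneratedCone {n : ℕ} (C : Set (Fin n → ℚ)) : Prop :=
  ∃ (k : ℕ) (v : Fin k → (Fin n → ℚ)),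
    C = {x | ∃ lam : Fin k → ℚ, 0 ≤ lam ∧ x = ∑ i, lam i • v i}

/-- A polytope is a bounded polyhedron. -/
def IsPolytope {n : ℕ} (P : Set (Fin n → ℚ)) : Prop :=
  IsPolyhedron P ∧ ∃ M : ℚ, ∀ x ∈ P, ∀ i, |x i| ≤ M

open Set
open scoped Pointwise

section Polyhedral

variable {𝕜 : Type*} [Field 𝕜] [LinearOrder 𝕜] {ι κ : Type*} [Fintype ι] [Fintype κ]

def polyhedron (s : Finset ((ι → 𝕜) × 𝕜)) : Set (ι → 𝕜) :=
  {x | ∀ p ∈ s, p.1 ⬝ᵥ x ≤ p.2}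

def IsPolyhedral (P : Set (ι → 𝕜)) : Prop :=
  ∃ s, polyhedron s = P

theorem IsPolyhedral.inter {P Q : Set (ι → 𝕜)} (hP : IsPolyhedral P) (hQ : IsPolyhedral Q) :
    IsPolyhedral (P ∩ Q) := by
  classical
  obtain ⟨s, rfl⟩ := hP
  obtain ⟨t, rfl⟩ := hQ
  exact ⟨s ∪ t, by ext x; simp [polyhedron, or_imp, forall_and]⟩

theorem IsPolyhedral.preimage {P : Set (ι → 𝕜)} (hP : IsPolyhedral P)
    (f : (κ → 𝕜) →ₗ[𝕜] ι → 𝕜) : IsPolyhedral (f ⁻¹' P) := by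
  classical
  obtain ⟨s, rfl⟩ := hP
  refine ⟨s.image fun p => (p.1 ᵥ* LinearMap.toMatrix' f, p.2), ?_⟩
  ext x
  simp only [polyhedron, Finset.forall_mem_image, mem_preimage, mem_ofPred_eq,
    ← dotProduct_mulVec, LinearMap.toMatrix'_mulVec]

theorem isPolyhedral_Iic (b : ι → 𝕜) : IsPolyhedral (Iic b) := by
  classical
  refine ⟨Finset.univ.image fun i => (Pi.single i 1, b i), ?_⟩
  ext x
  simp [polyhedron, Pi.le_def]

variable [IsStrictOrderedRing 𝕜]

theorem isPolyhedral_Ici (b : ι → 𝕜) : IsPolyhedral (Ici b) := by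
  convert (isPolyhedral_Iic (-b)).preimage (-LinearMap.id) using 1
  ext x
  simp

theorem isPolyhedral_singleton (b : ι → 𝕜) : IsPolyhedral {b} := by
  rw [← Icc_self, ← Ici_inter_Iic]
  exact (isPolyhedral_Ici b).inter (isPolyhedral_Iic b)

theorem isPolyhedral_stdSimplex : IsPolyhedral (stdSimplex 𝕜 ι) := by
  classical
  refine (isPolyhedral_Ici 0).inter ⟨{(1, 1), (-1, -1)}, ?_⟩
  ext x
  simp only [polyhedron, Finset.mem_insert, Finset.mem_singleton, forall_eq_or_imp, forall_eq,
    neg_dotProduct, one_dotProduct, neg_le_neg_iff, ← le_antisymm_iff]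
  rfl

theorem polyhedron_image_smul (s : Finset ((ι → 𝕜) × 𝕜))
    (c : (ι → 𝕜) × 𝕜 → 𝕜) (hc : ∀ p ∈ s, 0 < c p) :
    polyhedron (s.image fun p => c p • p) = polyhedron s := by
  classical
  ext x
  simp only [polyhedron, Finset.forall_mem_image, mem_ofPred_eq, Prod.smul_fst, Prod.smul_snd,
    smul_dotProduct, smul_eq_mul]
  exact forall₂_congr fun p hp => mul_le_mul_iff_right₀ (hc p hp)

end Polyhedral

theorem Finset.exists_between_of_forall_le {α : Type*} [LinearOrder α] [Nonempty α]
    {s t : Finset α} (h : ∀ a ∈ s, ∀ b ∈ t, a ≤ b) :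
    ∃ c, (∀ a ∈ s, a ≤ c) ∧ ∀ b ∈ t, c ≤ b := by
  rcases s.eq_empty_or_nonempty with rfl | hs
  · rcases t.eq_empty_or_nonempty with rfl | ht
    · exact ⟨Classical.arbitrary α, by simp⟩
    · exact ⟨t.min' ht, by simp, fun b hb => t.min'_le b hb⟩
  · exact ⟨s.max' hs, fun a ha => s.le_max' a ha, fun b hb => (s.max'_le hs) _ (h · · b hb)⟩

theorem dotProduct_snoc {R : Type*} [NonUnitalNonAssocSemiring R] {n : ℕ}
    (a : Fin (n + 1) → R) (x : Fin n → R) (t : R) :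
    a ⬝ᵥ Fin.snoc x t = Fin.init a ⬝ᵥ x + a (Fin.last n) * t := by
  simp [dotProduct, Fin.sum_univ_castSucc, Fin.init]

section FourierMotzkin

variable {𝕜 : Type*} [Field 𝕜] [LinearOrder 𝕜] {n : ℕ}

/-- Only meaningful when every last coefficient is `0`, `1` or `-1`. -/
def fourierMotzkin (s : Finset ((Fin (n + 1) → 𝕜) × 𝕜)) : Finset ((Fin n → 𝕜) × 𝕜) :=
  (s.filter (·.1 (Fin.last n) = 0)).image (fun p => (Fin.init p.1, p.2)) ∪
    ((s.filter (·.1 (Fin.last n) = 1)) ×ˢ (s.filter (·.1 (Fin.last n) = -1))).image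
      fun pq => (Fin.init pq.1.1 + Fin.init pq.2.1, pq.1.2 + pq.2.2)

theorem mem_polyhedron_fourierMotzkin {s : Finset ((Fin (n + 1) → 𝕜) × 𝕜)} {x : Fin n → 𝕜} :
    x ∈ polyhedron (fourierMotzkin s) ↔
      (∀ p ∈ s, p.1 (Fin.last n) = 0 → Fin.init p.1 ⬝ᵥ x ≤ p.2) ∧
      ∀ p ∈ s, p.1 (Fin.last n) = 1 → ∀ q ∈ s, q.1 (Fin.last n) = -1 →
        Fin.init p.1 ⬝ᵥ x + Fin.init q.1 ⬝ᵥ x ≤ p.2 + q.2 := by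
  simp only [polyhedron, fourierMotzkin, mem_ofPred_eq, Finset.forall_mem_union,
    Finset.forall_mem_image, Finset.mem_filter, Finset.mem_product, Prod.forall, and_imp,
    add_dotProduct]
  exact and_congr_right fun _ => ⟨fun h a b ha ha1 a' b' ha' ha'1 => h a b a' b' ha ha1 ha' ha'1,
    fun h a b a' b' ha ha1 ha' ha'1 => h a b ha ha1 a' b' ha' ha'1⟩

variable [IsStrictOrderedRing 𝕜]

theorem exists_rescaled_polyhedron_eq (s : Finset ((Fin (n + 1) → 𝕜) × 𝕜)) :
    ∃ s', polyhedron s' = polyhedron s ∧ ∀ p ∈ s',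
      p.1 (Fin.last n) = 0 ∨ p.1 (Fin.last n) = 1 ∨ p.1 (Fin.last n) = -1 := by
  classical
  let c : (Fin (n + 1) → 𝕜) × 𝕜 → 𝕜 := fun p => if p.1 (Fin.last n) = 0 then 1 else
    |p.1 (Fin.last n)|⁻¹
  refine ⟨s.image fun p => c p • p, polyhedron_image_smul s c fun p _ => ?_, ?_⟩
  · by_cases h : p.1 (Fin.last n) = 0 <;> simp [c, h]
  · simp only [Finset.forall_mem_image, Prod.smul_fst, Pi.smul_apply, smul_eq_mul]
    intro p _
    rcases lt_trichotomy (p.1 (Fin.last n)) 0 with h | h | h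
    · simp [c, h.ne, abs_of_neg h]
    · simp [c, h]
    · simp [c, h.ne', abs_of_pos h]

theorem polyhedron_fourierMotzkin {s : Finset ((Fin (n + 1) → 𝕜) × 𝕜)}
    (hs : ∀ p ∈ s, p.1 (Fin.last n) = 0 ∨ p.1 (Fin.last n) = 1 ∨ p.1 (Fin.last n) = -1) :
    polyhedron (fourierMotzkin s) = {x | ∃ t, Fin.snoc x t ∈ polyhedron s} := by
  ext x
  rw [mem_polyhedron_fourierMotzkin]
  simp only [mem_ofPred_eq, polyhedron, dotProduct_snoc]
  constructor
  · rintro ⟨h₀, h₁⟩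
    obtain ⟨t, hlower, hupper⟩ := Finset.exists_between_of_forall_le
      (s := (s.filter (·.1 (Fin.last n) = -1)).image fun q => Fin.init q.1 ⬝ᵥ x - q.2)
      (t := (s.filter (·.1 (Fin.last n) = 1)).image fun p => p.2 - Fin.init p.1 ⬝ᵥ x) (by
        simp only [Finset.forall_mem_image, Finset.mem_filter, and_imp]
        intro q hq hq1 p hp hp1
        linarith [h₁ p hp hp1 q hq hq1])
    simp only [Finset.forall_mem_image, Finset.mem_filter, and_imp] at hlower hupper
    refine ⟨t, fun p hp => ?_⟩
    rcases hs p hp with h | h | h <;> rw [h]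
    · linarith [h₀ p hp h]
    · linarith [hupper hp h]
    · linarith [hlower hp h]
  · rintro ⟨t, ht⟩
    refine ⟨fun p hp hp0 => ?_, fun p hp hp1 q hq hq1 => ?_⟩
    · simpa [hp0] using ht p hp
    · have hp' := ht p hp
      have hq' := ht q hq
      rw [hp1] at hp'
      rw [hq1] at hq'
      linarith

theorem IsPolyhedral.exists_snoc {P : Set (Fin (n + 1) → 𝕜)} (hP : IsPolyhedral P) :
    IsPolyhedral {x | ∃ t, Fin.snoc x t ∈ P} := by
  obtain ⟨s, rfl⟩ := hP
  obtain ⟨s', hs', hs'_last⟩ := exists_rescaled_polyhedron_eq s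
  exact ⟨fourierMotzkin s', by rw [polyhedron_fourierMotzkin hs'_last, hs']⟩

end FourierMotzkin

@[simp]
theorem LinearMap.funLeft_castAdd_append {R : Type*} [Semiring R] {m k : ℕ} (x : Fin m → R)
    (w : Fin k → R) : LinearMap.funLeft R R (Fin.castAdd k) (Fin.append x w) = x :=
  funext (Fin.append_left x w)

@[simp]
theorem LinearMap.funLeft_natAdd_append {R : Type*} [Semiring R] {m k : ℕ} (x : Fin m → R)
    (w : Fin k → R) : LinearMap.funLeft R R (Fin.natAdd m) (Fin.append x w) = w :=
  funext (Fin.append_right x w)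

section Elimination

variable {𝕜 : Type*} [Field 𝕜] [LinearOrder 𝕜] [IsStrictOrderedRing 𝕜] {n : ℕ}

theorem IsPolyhedral.exists_append {k : ℕ} {P : Set (Fin (n + k) → 𝕜)} (hP : IsPolyhedral P) :
    IsPolyhedral {x | ∃ w : Fin k → 𝕜, Fin.append x w ∈ P} := by
  induction k with
  | zero =>
    have h (x : Fin n → 𝕜) (w : Fin 0 → 𝕜) : Fin.append x w = x :=
      Fin.append_right_nil x w rfl
    simpa [h] using hP
  | succ k ih =>
    convert ih hP.exists_snoc using 1
    ext x
    constructor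
    · rintro ⟨w, hw⟩
      exact ⟨Fin.init w, w (Fin.last k), by rwa [← Fin.append_snoc, Fin.snoc_init_self]⟩
    · rintro ⟨w, t, hw⟩
      exact ⟨Fin.snoc w t, by rwa [Fin.append_snoc]⟩

theorem IsPolyhedral.image {κ : Type*} [Fintype κ] {P : Set (κ → 𝕜)} (hP : IsPolyhedral P)
    (f : (κ → 𝕜) →ₗ[𝕜] Fin n → 𝕜) : IsPolyhedral (f '' P) := by
  suffices h : ∀ {k} {P : Set (Fin k → 𝕜)}, IsPolyhedral P →
      ∀ f : (Fin k → 𝕜) →ₗ[𝕜] Fin n → 𝕜, IsPolyhedral (f '' P) by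
    let e := LinearEquiv.funCongrLeft 𝕜 𝕜 (Fintype.equivFin κ)
    rw [← e.surjective.image_preimage P, ← image_comp]
    exact h (hP.preimage e.toLinearMap) (f ∘ₗ e.toLinearMap)
  intro k P hP f
  -- `f '' P` is the projection of the graph `{(f x, x) | x ∈ P}`
  let fst : (Fin (n + k) → 𝕜) →ₗ[𝕜] Fin n → 𝕜 := LinearMap.funLeft 𝕜 𝕜 (Fin.castAdd k)
  let snd : (Fin (n + k) → 𝕜) →ₗ[𝕜] Fin k → 𝕜 := LinearMap.funLeft 𝕜 𝕜 (Fin.natAdd n)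
  have hgraph : IsPolyhedral (snd ⁻¹' P ∩ (f ∘ₗ snd - fst) ⁻¹' {0}) :=
    (hP.preimage snd).inter ((isPolyhedral_singleton 0).preimage _)
  convert hgraph.exists_append using 1
  ext y
  simp [fst, snd, sub_eq_zero]

theorem IsPolyhedral.add {P Q : Set (Fin n → 𝕜)} (hP : IsPolyhedral P) (hQ : IsPolyhedral Q) :
    IsPolyhedral (P + Q) := by
  let fst : (Fin (n + n) → 𝕜) →ₗ[𝕜] Fin n → 𝕜 := LinearMap.funLeft 𝕜 𝕜 (Fin.castAdd n)
  let snd : (Fin (n + n) → 𝕜) →ₗ[𝕜] Fin n → 𝕜 := LinearMap.funLeft 𝕜 𝕜 (Fin.natAdd n)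
  convert ((hP.preimage fst).inter (hQ.preimage snd)).image (fst + snd) using 1
  ext z
  simp only [Set.mem_add, mem_image, mem_inter_iff, mem_preimage, LinearMap.add_apply]
  constructor
  · rintro ⟨x, hx, y, hy, rfl⟩
    exact ⟨Fin.append x y, by simpa [fst, snd] using ⟨hx, hy⟩⟩
  · rintro ⟨w, ⟨hw₁, hw₂⟩, rfl⟩
    exact ⟨_, hw₁, _, hw₂, rfl⟩

end Elimination

section Cones

open PointedCone

theorem PointedCone.coe_hull_range {𝕜 E κ : Type*} [Semiring 𝕜] [PartialOrder 𝕜]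
    [IsOrderedRing 𝕜] [AddCommMonoid E] [Module 𝕜 E] [Fintype κ] (v : κ → E) :
    (hull 𝕜 (range v) : Set E) = Fintype.linearCombination 𝕜 v '' Ici 0 := by
  ext x
  simp only [SetLike.mem_coe, Submodule.mem_span_range_iff_exists_fun, mem_image, mem_Ici,
    Fintype.linearCombination_apply]
  constructor
  · rintro ⟨c, rfl⟩
    exact ⟨fun i => c i, fun i => (c i).2, rfl⟩
  · rintro ⟨lam, hlam, rfl⟩
    exact ⟨fun i => ⟨lam i, hlam i⟩, rfl⟩

variable {𝕜 : Type*} [Field 𝕜] [LinearOrder 𝕜] [IsStrictOrderedRing 𝕜] {n : ℕ}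

theorem PointedCone.isPolyhedral_of_fg {C : PointedCone 𝕜 (Fin n → 𝕜)} (hC : C.FG) :
    IsPolyhedral (C : Set (Fin n → 𝕜)) := by
  obtain ⟨k, v, rfl⟩ := Submodule.fg_iff_exists_fin_generating_family.mp hC
  rw [coe_hull_range]
  exact (isPolyhedral_Ici 0).image _

theorem PointedCone.dualFG_of_isPolyhedral {ι : Type*} [Fintype ι] {C : PointedCone 𝕜 (ι → 𝕜)}
    (hC : IsPolyhedral (C : Set (ι → 𝕜))) : C.DualFG (dotProductBilin 𝕜 𝕜) := by
  classical
  obtain ⟨s, hs⟩ := hC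
  have hb : ∀ p ∈ s, 0 ≤ p.2 := by
    have h0 : (0 : ι → 𝕜) ∈ polyhedron s := hs ▸ C.zero_mem
    simpa [polyhedron] using h0
  refine ⟨s.image fun p => -p.1, ?_⟩
  ext x
  simp only [mem_dual, Finset.coe_image, mem_image, Finset.mem_coe, forall_exists_index, and_imp,
    forall_apply_eq_imp_iff₂, dotProductBilin_apply_apply, neg_dotProduct, neg_nonneg]
  constructor
  · intro hx
    rw [← SetLike.mem_coe, ← hs]
    exact fun p hp => (hx p hp).trans (hb p hp)
  · intro hx p hp
    -- otherwise a large multiple of `x` would violate `p`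
    by_contra! hpos
    have hc : 0 ≤ (p.2 + 1) / (p.1 ⬝ᵥ x) := div_nonneg (by linarith [hb p hp]) hpos.le
    have hmem : ((p.2 + 1) / (p.1 ⬝ᵥ x)) • x ∈ polyhedron s := by
      rw [hs]
      exact C.smul_mem hc hx
    have := hmem p hp
    rw [dotProduct_smul, smul_eq_mul, div_mul_cancel₀ _ hpos.ne'] at this
    linarith

theorem PointedCone.dualFG_of_fg {C : PointedCone 𝕜 (Fin n → 𝕜)} (hC : C.FG) :
    C.DualFG (dotProductBilin 𝕜 𝕜) :=
  dualFG_of_isPolyhedral (isPolyhedral_of_fg hC)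

theorem PointedCone.fg_of_dualFG {C : PointedCone 𝕜 (Fin n → 𝕜)}
    (hC : C.DualFG (dotProductBilin 𝕜 𝕜)) : C.FG := by
  have hflip : (dotProductBilin 𝕜 𝕜 : (Fin n → 𝕜) →ₗ[𝕜] _ →ₗ[𝕜] 𝕜).flip = dotProductBilin 𝕜 𝕜 := by
    ext
    simp [dotProduct_comm]
  obtain ⟨s, rfl⟩ := hC
  have hfg (u : Finset (Fin n → 𝕜)) : (hull 𝕜 (u : Set (Fin n → 𝕜))).FG :=
    Submodule.fg_span u.finite_toSet
  -- `hull s = dual t` by Weyl, so `dual s = dual (dual (hull t)) = hull t` by Weyl for `hull t`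
  obtain ⟨t, ht⟩ := dualFG_of_fg (hfg s)
  have h := (dualFG_of_fg (hfg t)).dual_dual_flip
  rw [hflip, dual_hull, ht, dual_hull] at h
  exact h ▸ hfg t

end Cones

section Decomposition

open PointedCone

theorem linearCombination_sumElim_snoc {R κ₀ κ₁ : Type*} [Semiring R] [Fintype κ₀]
    [Fintype κ₁] {n : ℕ} (g₀ : κ₀ → Fin n → R) (g₁ : κ₁ → Fin n → R) (lam : κ₀ ⊕ κ₁ → R) :
    Fintype.linearCombination R
        (Sum.elim (fun i => (Fin.snoc (g₀ i) 0 : Fin (n + 1) → R)) fun j => Fin.snoc (g₁ j) 1) lam =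
      (Fin.snoc
        (Fintype.linearCombination R g₀ (lam ∘ Sum.inl) +
          Fintype.linearCombination R g₁ (lam ∘ Sum.inr))
        (∑ j, lam (Sum.inr j)) : Fin (n + 1) → R) := by
  ext i
  induction i using Fin.lastCases <;>
    simp [Fintype.linearCombination_apply, Fintype.sum_sum_type, Finset.sum_apply]

variable {𝕜 : Type*} [Field 𝕜] [LinearOrder 𝕜] [IsStrictOrderedRing 𝕜] {n : ℕ}

theorem convexHull_range_eq_image_stdSimplex {E κ : Type*} [AddCommGroup E] [Module 𝕜 E]
    [Fintype κ] (v : κ → E) :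
    convexHull 𝕜 (range v) = Fintype.linearCombination 𝕜 v '' stdSimplex 𝕜 κ := by
  classical
  rw [← convexHull_rangle_single_eq_stdSimplex, LinearMap.image_convexHull, ← range_comp]
  simp [Function.comp_def]

theorem snoc_one_mem_hull_iff {κ₀ κ₁ : Type*} [Fintype κ₀] [Fintype κ₁] (g₀ : κ₀ → Fin n → 𝕜)
    (g₁ : κ₁ → Fin n → 𝕜) (x : Fin n → 𝕜) :
    (Fin.snoc x 1 : Fin (n + 1) → 𝕜) ∈
        hull 𝕜 (range (Sum.elim (fun i => (Fin.snoc (g₀ i) 0 : Fin (n + 1) → 𝕜))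
          fun j => Fin.snoc (g₁ j) 1)) ↔
      x ∈ (hull 𝕜 (range g₀) : Set (Fin n → 𝕜)) + convexHull 𝕜 (range g₁) := by
  rw [← SetLike.mem_coe, coe_hull_range, coe_hull_range, convexHull_range_eq_image_stdSimplex]
  simp only [mem_image, Set.mem_add, linearCombination_sumElim_snoc, Fin.snoc_inj]
  constructor
  · rintro ⟨lam, hlam, hx, hlam₁⟩
    exact ⟨_, ⟨lam ∘ Sum.inl, fun i => hlam _, rfl⟩,
      _, ⟨lam ∘ Sum.inr, ⟨fun j => hlam _, hlam₁⟩, rfl⟩, hx⟩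
  · rintro ⟨_, ⟨α, hα, rfl⟩, _, ⟨μ, ⟨hμ, hμ₁⟩, rfl⟩, rfl⟩
    refine ⟨Sum.elim α μ, ?_, ?_⟩
    · rintro (i | j)
      exacts [hα i, hμ j]
    · simpa using hμ₁

end Decomposition

section Homogenization

open PointedCone

variable {𝕜 : Type*} [Field 𝕜] [LinearOrder 𝕜] [IsStrictOrderedRing 𝕜] {n : ℕ}

theorem Fin.snoc_smul_init {R : Type*} [Mul R] (c : R) (y : Fin (n + 1) → R) :
    (Fin.snoc (c • Fin.init y) (c * y (Fin.last n)) : Fin (n + 1) → R) = c • y := by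
  ext i
  induction i using Fin.lastCases <;> simp [Fin.init]

def homogenization (s : Finset ((Fin n → 𝕜) × 𝕜)) : Finset (Fin (n + 1) → 𝕜) :=
  insert (Fin.snoc 0 1) (s.image fun p => Fin.snoc (-p.1) p.2)

theorem snoc_mem_dual_homogenization_iff {s : Finset ((Fin n → 𝕜) × 𝕜)} {x : Fin n → 𝕜}
    {t : 𝕜} :
    (Fin.snoc x t : Fin (n + 1) → 𝕜) ∈ dual (dotProductBilin 𝕜 𝕜) (homogenization s : Set _) ↔
      0 ≤ t ∧ ∀ p ∈ s, p.1 ⬝ᵥ x ≤ p.2 * t := by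
  classical
  simp only [homogenization, mem_dual, Finset.coe_insert, Finset.coe_image, forall_mem_insert,
    forall_mem_image, Finset.mem_coe, dotProductBilin_apply_apply, dotProduct_snoc, Fin.init_snoc,
    Fin.snoc_last, zero_dotProduct, one_mul, zero_add, neg_dotProduct, le_neg_add_iff_le]

theorem exists_hull_eq_hull_snoc_zero_one (u : Finset (Fin (n + 1) → 𝕜))
    (hu : ∀ y ∈ u, 0 ≤ y (Fin.last n)) :
    ∃ U₀ U₁ : Finset (Fin n → 𝕜), hull 𝕜 (u : Set (Fin (n + 1) → 𝕜)) =
      hull 𝕜 (range (Sum.elim (fun y : U₀ => (Fin.snoc (y : Fin n → 𝕜) 0 : Fin (n + 1) → 𝕜))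
        fun y : U₁ => Fin.snoc (y : Fin n → 𝕜) 1)) := by
  classical
  refine ⟨(u.filter (· (Fin.last n) = 0)).image Fin.init,
    (u.filter (· (Fin.last n) ≠ 0)).image fun y => (y (Fin.last n))⁻¹ • Fin.init y, ?_⟩
  have hzero {y} (h : y (Fin.last n) = 0) : (Fin.snoc (Fin.init y) 0 : Fin (n + 1) → 𝕜) = y := by
    rw [← h, Fin.snoc_init_self]
  have hone {y} (h : y (Fin.last n) ≠ 0) :
      (Fin.snoc ((y (Fin.last n))⁻¹ • Fin.init y) 1 : Fin (n + 1) → 𝕜) =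
        (y (Fin.last n))⁻¹ • y := by
    rw [← Fin.snoc_smul_init, inv_mul_cancel₀ h]
  apply Submodule.span_eq_span
  · intro y hy
    by_cases h : y (Fin.last n) = 0
    · refine Submodule.subset_span ⟨Sum.inl ⟨Fin.init y, ?_⟩, hzero h⟩
      exact Finset.mem_image_of_mem _ (Finset.mem_filter.2 ⟨hy, h⟩)
    · rw [SetLike.mem_coe, ← smul_inv_smul₀ h y]
      refine PointedCone.smul_mem _ (hu y hy) (Submodule.subset_span ⟨Sum.inr ⟨_, ?_⟩, hone h⟩)
      exact Finset.mem_image_of_mem _ (Finset.mem_filter.2 ⟨hy, h⟩)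
  · rintro _ ⟨⟨z, hz⟩ | ⟨z, hz⟩, rfl⟩
    · obtain ⟨y, hy, rfl⟩ := Finset.mem_image.1 hz
      rw [Finset.mem_filter] at hy
      simpa [hzero hy.2] using Submodule.subset_span hy.1
    · obtain ⟨y, hy, rfl⟩ := Finset.mem_image.1 hz
      rw [Finset.mem_filter] at hy
      simpa [hone hy.2] using
        (hull 𝕜 _).smul_mem (inv_nonneg.2 (hu y hy.1)) (Submodule.subset_span hy.1)

theorem IsPolyhedral.exists_eq_hull_add_convexHull {P : Set (Fin n → 𝕜)} (hP : IsPolyhedral P) :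
    ∃ U₀ U₁ : Finset (Fin n → 𝕜),
      P = (hull 𝕜 (U₀ : Set (Fin n → 𝕜)) : Set (Fin n → 𝕜)) +
        convexHull 𝕜 (U₁ : Set (Fin n → 𝕜)) := by
  obtain ⟨s, rfl⟩ := hP
  obtain ⟨u, hu⟩ : ∃ u : Finset (Fin (n + 1) → 𝕜), hull 𝕜 (u : Set (Fin (n + 1) → 𝕜)) =
      dual (dotProductBilin 𝕜 𝕜) (homogenization s : Set _) :=
    fg_of_dualFG ⟨homogenization s, rfl⟩
  have hlast : ∀ y ∈ u, 0 ≤ y (Fin.last n) := by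
    intro y hy
    have hy' : y ∈ dual (dotProductBilin 𝕜 𝕜) (homogenization s : Set _) :=
      hu ▸ Submodule.subset_span hy
    rw [← Fin.snoc_init_self y] at hy'
    exact (snoc_mem_dual_homogenization_iff.1 hy').1
  obtain ⟨U₀, U₁, hU⟩ := exists_hull_eq_hull_snoc_zero_one u hlast
  refine ⟨U₀, U₁, Set.ext fun x => ?_⟩
  have h := snoc_one_mem_hull_iff ((↑) : U₀ → Fin n → 𝕜) ((↑) : U₁ → Fin n → 𝕜) x
  rw [Subtype.range_coe, Subtype.range_coe, ← hU, hu, snoc_mem_dual_homogenization_iff] at h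
  simpa [polyhedron] using h

end Homogenization

section Polytopes

variable {𝕜 : Type*} [Field 𝕜] [LinearOrder 𝕜] [IsStrictOrderedRing 𝕜]

theorem isPolyhedral_convexHull {n : ℕ} (S : Finset (Fin n → 𝕜)) :
    IsPolyhedral (convexHull 𝕜 (S : Set (Fin n → 𝕜))) := by
  rw [← Subtype.range_coe (s := (S : Set (Fin n → 𝕜))), convexHull_range_eq_image_stdSimplex]
  exact isPolyhedral_stdSimplex.image _

theorem exists_abs_le_of_mem_convexHull {ι : Type*} [Fintype ι] (S : Finset (ι → 𝕜)) :
    ∃ M, ∀ x ∈ convexHull 𝕜 (S : Set (ι → 𝕜)), ∀ i, |x i| ≤ M := by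
  classical
  obtain ⟨M, hM⟩ := ((S ×ˢ Finset.univ).image fun p : (ι → 𝕜) × ι => |p.1 p.2|).bddAbove
  have hbox : Convex 𝕜 {x : ι → 𝕜 | ∀ i, |x i| ≤ M} := by
    have h : {x : ι → 𝕜 | ∀ i, |x i| ≤ M} = univ.pi fun _ => Icc (-M) M := by
      ext
      simp only [mem_ofPred_eq, mem_pi, mem_univ, true_implies, mem_Icc, abs_le]
    rw [h]
    exact convex_pi fun _ _ => convex_Icc _ _
  refine ⟨M, fun x hx i =>
    convexHull_min (t := {x | ∀ i, |x i| ≤ M}) (fun y hy i => hM ?_) hbox hx i⟩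
  exact Finset.mem_image.2 ⟨(y, i), Finset.mem_product.2 ⟨hy, Finset.mem_univ i⟩, rfl⟩

end Polytopes

section Rational

open PointedCone

variable {n : ℕ}

theorem isPolyhedral_iff_isPolyhedron {P : Set (Fin n → ℚ)} : IsPolyhedral P ↔ IsPolyhedron P := by
  constructor
  · rintro ⟨s, rfl⟩
    refine ⟨s.card, fun i => (s.equivFin.symm i).1.1, fun i => (s.equivFin.symm i).1.2, ?_⟩
    ext x
    simp only [polyhedron, mem_ofPred_eq, Pi.le_def, mulVec]
    exact ⟨fun h i => h _ (s.equivFin.symm i).2,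
      fun h p hp => by simpa using h (s.equivFin ⟨p, hp⟩)⟩
  · rintro ⟨m, A, b, rfl⟩
    exact (isPolyhedral_Iic b).preimage A.mulVecLin

theorem isFinitelyGeneratedCone_iff {C : Set (Fin n → ℚ)} :
    IsFinitelyGeneratedCone C ↔
      ∃ K : PointedCone ℚ (Fin n → ℚ), K.FG ∧ (K : Set (Fin n → ℚ)) = C := by
  have key (k : ℕ) (v : Fin k → Fin n → ℚ) : (hull ℚ (range v) : Set (Fin n → ℚ)) =
      {x | ∃ lam : Fin k → ℚ, 0 ≤ lam ∧ x = ∑ i, lam i • v i} := by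
    rw [coe_hull_range]
    ext
    simp [Fintype.linearCombination_apply, eq_comm]
  simp only [IsFinitelyGeneratedCone, Submodule.fg_iff_exists_fin_generating_family]
  constructor
  · rintro ⟨k, v, rfl⟩
    exact ⟨_, ⟨k, v, rfl⟩, key k v⟩
  · rintro ⟨K, ⟨k, v, rfl⟩, rfl⟩
    exact ⟨k, v, key k v⟩

theorem isPolytope_convexHull (S : Finset (Fin n → ℚ)) :
    IsPolytope (convexHull ℚ (S : Set (Fin n → ℚ))) :=
  ⟨isPolyhedral_iff_isPolyhedron.1 (isPolyhedral_convexHull S), exists_abs_le_of_mem_convexHull S⟩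

end Rational

/-- Decomposition theorem for convex polyhedra: `P` is a polyhedron iff it
is the Minkowski sum of a finitely generated cone and a polytope. -/
theorem polyhedron_decomposition (n : ℕ) (P : Set (Fin n → ℚ)) :
    IsPolyhedron P ↔
      ∃ C Q : Set (Fin n → ℚ), IsFinitelyGeneratedCone C ∧ IsPolytope Q ∧
        P = {z | ∃ c ∈ C, ∃ q ∈ Q, z = c + q} := by
  have hsum (C Q : Set (Fin n → ℚ)) : {z | ∃ c ∈ C, ∃ q ∈ Q, z = c + q} = C + Q := by
    ext
    simp [Set.mem_add, eq_comm]
  simp only [hsum, ← isPolyhedral_iff_isPolyhedron]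
  constructor
  · intro hP
    obtain ⟨U₀, U₁, rfl⟩ := hP.exists_eq_hull_add_convexHull
    exact ⟨_, _, isFinitelyGeneratedCone_iff.2 ⟨_, Submodule.fg_span U₀.finite_toSet, rfl⟩,
      isPolytope_convexHull U₁, rfl⟩
  · rintro ⟨C, Q, hC, ⟨hQ, -⟩, rfl⟩
    obtain ⟨K, hK, rfl⟩ := isFinitelyGeneratedCone_iff.1 hC
    exact (PointedCone.isPolyhedral_of_fg hK).add (isPolyhedral_iff_isPolyhedron.2 hQ)
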